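/- arXiv:2106.12784 — 2 statements merged into one kernel-verified Lean document; each statement's English description precedes it below -/
import Mathlib

section
/- Let μ be a Borel probability measure on ℝ with continuous cumulative distribution function F, having finite first moment E_F = ∫ z dμ(z). Let θ, δ₀ ∈ ℝ, δ₁ > 0, and let Y be a real-valued random variable with P(Y > y) = F(θ − δ₀ − δ₁·y) for all y ∈ ℝ. Then Y is integrable and E(Y) = (θ − δ₀ − E_F)/δ₁. -/
/-! Continuity of `F` makes `μ` atomless, so for `Z ∼ μ`
`P(Y > y) = μ(Z < θ - δ₀ - δ₁ y) = P((θ - δ₀ - Z) / δ₁ > y)`: the response `Y` has the law of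
the affine image `(θ - δ₀ - Z) / δ₁`, and its expectation follows by linearity. -/

open MeasureTheory ProbabilityTheory Set

lemma ProbabilityTheory.nullSingletonClass_of_continuous_cdf (μ : Measure ℝ)
    [IsProbabilityMeasure μ] (h : Continuous (cdf μ)) : NullSingletonClass μ where
  measure_singleton c := by
    rw [← measure_cdf μ, StieltjesFunction.measure_singleton,
      h.continuousAt.continuousWithinAt.leftLim_eq, sub_self, ENNReal.ofReal_zero]

lemma MeasureTheory.Measure.ext_of_Ioi {α : Type*} [TopologicalSpace α] {_ : MeasurableSpace α}
    [SecondCountableTopology α] [LinearOrder α] [OrderTopology α] [BorelSpace α]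
    (μ ν : Measure α) [IsProbabilityMeasure μ] [IsProbabilityMeasure ν]
    (h : ∀ a, μ (Ioi a) = ν (Ioi a)) : μ = ν :=
  Measure.ext_of_Iic μ ν fun a => by
    rw [← compl_Ioi, prob_compl_eq_one_sub measurableSet_Ioi,
      prob_compl_eq_one_sub measurableSet_Ioi, h a]

lemma ProbabilityTheory.identDistrib_of_linear_thresholds {Ω : Type*} [MeasurableSpace Ω]
    (P : Measure Ω) [IsProbabilityMeasure P] (μ : Measure ℝ) [IsProbabilityMeasure μ]
    [NullSingletonClass μ] {a b : ℝ} (hb : 0 < b) {Y : Ω → ℝ} (hYm : Measurable Y)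
    (hY : ∀ y, P.real {ω | y < Y ω} = μ.real (Iic (a - b * y))) :
    IdentDistrib Y (fun z => (a - z) / b) P μ where
  aemeasurable_fst := hYm.aemeasurable
  aemeasurable_snd := by fun_prop
  map_eq := by
    have := Measure.isProbabilityMeasure_map (μ := P) hYm.aemeasurable
    have := Measure.isProbabilityMeasure_map (μ := μ) (f := fun z => (a - z) / b) (by fun_prop)
    refine Measure.ext_of_Ioi _ _ fun y => ?_
    have hpre : (fun z => (a - z) / b) ⁻¹' Ioi y = Iio (a - b * y) := by
      ext z
      simp only [mem_preimage, mem_Ioi, mem_Iio, lt_div_iff₀ hb]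
      constructor <;> intro <;> linarith
    rw [Measure.map_apply hYm measurableSet_Ioi, Measure.map_apply (by fun_prop) measurableSet_Ioi,
      hpre, measure_congr Iio_ae_eq_Iic]
    exact (measureReal_eq_measureReal_iff (measure_ne_top _ _) (measure_ne_top _ _)).mp (hY y)

/-- In the linear thresholds model with continuous response function `F`
(the CDF of a probability measure `μ` with finite first moment `E_F`), the response `Y`
is integrable with `E(Y) = (θ - δ₀ - E_F) / δ₁`. -/
theorem thresholds_linear_expectation
    {Ω : Type*} [MeasurableSpace Ω] (P : Measure Ω) [IsProbabilityMeasure P]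
    (μ : Measure ℝ) [IsProbabilityMeasure μ]
    (F : ℝ → ℝ) (hF : ∀ t : ℝ, F t = (μ (Iic t)).toReal) (hFcont : Continuous F)
    (hμint : Integrable (fun z : ℝ => z) μ)
    (θ δ₀ δ₁ : ℝ) (hδ₁ : 0 < δ₁)
    (Y : Ω → ℝ) (hYm : Measurable Y)
    (hY : ∀ y : ℝ, (P {ω | y < Y ω}).toReal = F (θ - δ₀ - δ₁ * y)) :
    Integrable Y P ∧ ∫ ω, Y ω ∂P = (θ - δ₀ - ∫ z, z ∂μ) / δ₁ := by
  have hF_cdf : F = cdf μ := funext fun t => (hF t).trans (cdf_eq_real μ t).symm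
  have := nullSingletonClass_of_continuous_cdf μ (hF_cdf ▸ hFcont)
  have hlaw := identDistrib_of_linear_thresholds P μ hδ₁ hYm fun y => (hY y).trans (hF _)
  refine ⟨hlaw.integrable_iff.mpr (((integrable_const _).sub hμint).div_const _), ?_⟩
  rw [hlaw.integral_eq, integral_div, integral_sub (integrable_const _) hμint, integral_const]
  simp
end

section
/- Let F : ℝ → ℝ be strictly monotone (hence injective), let P and I be nonempty index sets, and let S be a nonempty set of thresholds. Let (θ, δ) and (θ̃, δ̃) be two parameterizations, where θ, θ̃ : P → ℝ and δ, δ̃ : I → S → ℝ, such that F(θ_p − δ_i(y)) = F(θ̃_p − δ̃_i(y)) for all p ∈ P, i ∈ I, y ∈ S. If δ_{i₀}(y₀) = δ̃_{i₀}(y₀) for some fixed item i₀ ∈ I and fixed threshold y₀ ∈ S, then θ_p = θ̃_p for all p ∈ P and δ_i(y) = δ̃_i(y) for all i ∈ I and y ∈ S. -/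
/-! Since `F` is injective, equal response probabilities give
`θ p - δ i y = θ̃ p - δ̃ i y`, i.e. `θ - θ̃` and `δ - δ̃` are one and the same constant shift.
Anchoring a single difficulty value forces that shift to be zero. -/

section ShiftInvariance

variable {G P I S : Type*} [AddCommGroup G] {θ θt : P → G} {δ δt : I → S → G}

theorem ability_eq_of_sub_eq_sub_of_difficulty_eq
    (hsub : ∀ p i y, θ p - δ i y = θt p - δt i y) {i₀ : I} {y₀ : S}
    (h0 : δ i₀ y₀ = δt i₀ y₀) (p : P) : θ p = θt p := by
  have hp := hsub p i₀ y₀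
  rw [h0] at hp
  exact sub_left_injective hp

theorem difficulty_eq_of_sub_eq_sub_of_ability_eq [Nonempty P]
    (hsub : ∀ p i y, θ p - δ i y = θt p - δt i y) (hθ : ∀ p, θ p = θt p)
    (i : I) (y : S) : δ i y = δt i y := by
  obtain ⟨p⟩ := ‹Nonempty P›
  have hp := hsub p i y
  rw [hθ p] at hp
  exact sub_right_injective hp

end ShiftInvariance

theorem thresholds_identifiable_fix_difficulty_general
    {P I S : Type*} [Nonempty P]
    (F : ℝ → ℝ) (hF : StrictMono F)
    (θ θt : P → ℝ) (δ δt : I → S → ℝ)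
    (h : ∀ (p : P) (i : I) (y : S), F (θ p - δ i y) = F (θt p - δt i y))
    (i₀ : I) (y₀ : S) (h0 : δ i₀ y₀ = δt i₀ y₀) :
    (∀ p : P, θ p = θt p) ∧ ∀ (i : I) (y : S), δ i y = δt i y := by
  have hsub : ∀ p i y, θ p - δ i y = θt p - δt i y := fun p i y => hF.injective (h p i y)
  have hθ := ability_eq_of_sub_eq_sub_of_difficulty_eq hsub h0
  exact ⟨hθ, difficulty_eq_of_sub_eq_sub_of_ability_eq hsub hθ⟩

/-- Identifiability of the thresholds model after fixing one item difficulty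
value: if two parameterizations `(θ, δ)` and `(θ̃, δ̃)` produce the same response
probabilities `F(θ_p - δ_i(y)) = F(θ̃_p - δ̃_i(y))` for a strictly monotone (hence
injective) response function `F`, and `δ_{i₀}(y₀) = δ̃_{i₀}(y₀)` for some fixed item `i₀`
and threshold `y₀`, then the two parameterizations coincide. -/
theorem thresholds_identifiable_fix_difficulty
    {P I S : Type*} [Nonempty P] [Nonempty I] [Nonempty S]
    (F : ℝ → ℝ) (hF : StrictMono F)
    (θ θt : P → ℝ) (δ δt : I → S → ℝ)
    (h : ∀ (p : P) (i : I) (y : S), F (θ p - δ i y) = F (θt p - δt i y))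
    (i₀ : I) (y₀ : S) (h0 : δ i₀ y₀ = δt i₀ y₀) :
    (∀ p : P, θ p = θt p) ∧ ∀ (i : I) (y : S), δ i y = δt i y :=
  thresholds_identifiable_fix_difficulty_general F hF θ θt δ δt h i₀ y₀ h0
end
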